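/- For every incidence graph G and integer k, if the strong recursive backdoor depth of G to 𝒞₀ is at most k, then every connected component of G has diameter at most 4·2^k − 4. -/

import Mathlib

/-- Variables are natural numbers. -/
abbrev Var := ℕ

/-- A CNF formula: a finite set of clause identifiers, each identifier `i`
carrying the set of variables occurring positively (`pos i`) and negatively (`neg i`). -/
structure CNF where
  ids : Finset ℕ
  pos : ℕ → Finset Var
  neg : ℕ → Finset Var

namespace CNF

/-- The variables of clause `i`. -/
def cvars (φ : CNF) (i : ℕ) : Finset Var := φ.pos i ∪ φ.neg i

/-- The variables of the formula. -/
def vars (φ : CNF) : Finset Var := φ.ids.biUnion φ.cvars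

/-- The length of the formula: the sum of clause widths. -/
def len (φ : CNF) : ℕ := ∑ i ∈ φ.ids, (φ.cvars i).card

/-- `φ ∈ 𝒞_d`: every clause has at most `d` variables. -/
def InC (φ : CNF) (d : ℕ) : Prop := ∀ i ∈ φ.ids, (φ.cvars i).card ≤ d

/-- Assigning variable `x` to Boolean value `b`: clauses satisfied by the
assignment are removed, and `x` is removed from the remaining clauses. -/
def assign (φ : CNF) (x : Var) (b : Bool) : CNF where
  ids := φ.ids.filter fun i => x ∉ (if b then φ.pos i else φ.neg i)
  pos := fun i => (φ.pos i).erase x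
  neg := fun i => (φ.neg i).erase x

/-- Assigning all variables of a set `D` according to `τ`. -/
def assignSet (φ : CNF) (D : Finset Var) (τ : Var → Bool) : CNF where
  ids := φ.ids.filter fun i => ¬ ∃ x ∈ D, if τ x then x ∈ φ.pos i else x ∈ φ.neg i
  pos := fun i => φ.pos i \ D
  neg := fun i => φ.neg i \ D

/-- `τ` satisfies every clause of `φ`. -/
def satBy (φ : CNF) (τ : Var → Bool) : Prop :=
  ∀ i ∈ φ.ids, (∃ x ∈ φ.pos i, τ x = true) ∨ (∃ x ∈ φ.neg i, τ x = false)

/-- `φ` is satisfiable. -/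
def sat (φ : CNF) : Prop := ∃ τ, φ.satBy τ

/-- The number of satisfying assignments of `φ` over its variables
(assignments are normalized to be `false` outside `vars φ`). -/
noncomputable def count (φ : CNF) : ℕ :=
  Nat.card {τ : Var → Bool // φ.satBy τ ∧ ∀ x ∉ φ.vars, τ x = false}

/-- The incidence graph of `φ`: variable vertices `Sum.inl x` and clause
vertices `Sum.inr i`, adjacent iff `x` occurs in clause `i` of `φ`. -/
def incGraph (φ : CNF) : SimpleGraph (Var ⊕ ℕ) where
  Adj u v := match u, v with
    | Sum.inl x, Sum.inr i => i ∈ φ.ids ∧ x ∈ φ.cvars i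
    | Sum.inr i, Sum.inl x => i ∈ φ.ids ∧ x ∈ φ.cvars i
    | _, _ => False
  symm := ⟨by rintro (x | i) (y | j) h <;> exact h⟩
  loopless := ⟨by rintro (x | i) h <;> exact h⟩

/-- The vertices of the incidence graph that belong to `φ`. -/
def vertexSet (φ : CNF) : Set (Var ⊕ ℕ) :=
  {v | match v with | Sum.inl x => x ∈ φ.vars | Sum.inr i => i ∈ φ.ids}

/-- The incidence graph of `φ` is connected. -/
def Conn (φ : CNF) : Prop :=
  ∀ u ∈ φ.vertexSet, ∀ v ∈ φ.vertexSet, (incGraph φ).Reachable u v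

/-- The connected component (as a subformula) of clause `i` of `φ`. -/
noncomputable def componentOf (φ : CNF) (i : ℕ) : CNF := by
  classical
  exact { ids := φ.ids.filter fun j => (incGraph φ).Reachable (Sum.inr i) (Sum.inr j),
          pos := φ.pos, neg := φ.neg }

/-- The connected components of `φ`, as subformulas. -/
noncomputable def components (φ : CNF) : Finset CNF := by
  classical
  exact φ.ids.image φ.componentOf

/-- `ψ` is a connected component of `φ`. -/
def IsComponent (φ ψ : CNF) : Prop := ψ ∈ φ.components

end CNF

/-- `SrbdLE φ k`: the strong recursive backdoor depth of `φ` to `𝒞₀` is at most `k`.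
Either `φ` is edgeless, or we may assign one variable both ways at cost one,
or we may split into connected components for free. -/
inductive SrbdLE : CNF → ℕ → Prop where
| base (φ : CNF) (k : ℕ) : φ.vars = ∅ → SrbdLE φ k
| assign (φ : CNF) (k : ℕ) (x : Var) : x ∈ φ.vars →
    SrbdLE (φ.assign x true) k → SrbdLE (φ.assign x false) k → SrbdLE φ (k+1)
| split (φ : CNF) (k : ℕ) : (∀ ψ ∈ φ.components, SrbdLE ψ k) → SrbdLE φ k

/-- `WrbdLE φ k`: the weak recursive backdoor depth of `φ` to `𝒞₀` is at most `k`. -/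
inductive WrbdLE : CNF → ℕ → Prop where
| base (φ : CNF) (k : ℕ) : φ.vars = ∅ → φ.sat → WrbdLE φ k
| assign (φ : CNF) (k : ℕ) (x : Var) (b : Bool) : x ∈ φ.vars →
    WrbdLE (φ.assign x b) k → WrbdLE φ (k+1)
| split (φ : CNF) (k : ℕ) : (∀ ψ ∈ φ.components, WrbdLE ψ k) → WrbdLE φ k

/-- A strong recursive backdoor tree of `φ` to the class `C`:
leaves are formulas in `C`; a variable node branches on both assignments of a
variable of `φ`; a component node has one child per connected component. -/
inductive SRB (C : Set CNF) : CNF → Type where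
| leaf : (φ : CNF) → φ ∈ C → SRB C φ
| varNode : (φ : CNF) → (x : Var) → x ∈ φ.vars →
    SRB C (φ.assign x true) → SRB C (φ.assign x false) → SRB C φ
| compNode : (φ : CNF) → ((ψ : CNF) → ψ ∈ φ.components → SRB C ψ) → SRB C φ

namespace SRB

variable {C : Set CNF}

/-- The depth of a strong recursive backdoor: the maximal number of variable
nodes on a root-to-leaf path. -/
noncomputable def depth : {φ : CNF} → SRB C φ → ℕ
| _, .leaf _ _ => 0
| _, .varNode _ _ _ l r => 1 + max (depth l) (depth r)
| _, .compNode φ f => φ.components.attach.sup fun ψ => depth (f ψ.1 ψ.2)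

/-- The number of leaf nodes of a strong recursive backdoor. -/
noncomputable def leaves : {φ : CNF} → SRB C φ → ℕ
| _, .leaf _ _ => 1
| _, .varNode _ _ _ l r => leaves l + leaves r
| _, .compNode φ f => ∑ ψ ∈ φ.components.attach, leaves (f ψ.1 ψ.2)

/-- Bottom-up satisfiability evaluation of a strong recursive backdoor:
a leaf evaluates to the satisfiability of its formula, a variable node to the
disjunction of its children, a component node to the conjunction of its children. -/
def eval : {φ : CNF} → SRB C φ → Prop
| _, .leaf φ _ => φ.sat
| _, .varNode _ _ _ l r => eval l ∨ eval r
| _, .compNode φ f => ∀ (ψ : CNF) (h : ψ ∈ φ.components), eval (f ψ h)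

/-- Bottom-up model counting: a leaf contributes its model count, a variable
node the sum over both polarities (corrected by factors `2^e` for variables
disappearing from all clauses), a component node the product over components. -/
noncomputable def countEval : {φ : CNF} → SRB C φ → ℕ
| _, .leaf φ _ => φ.count
| _, .varNode φ x _ l r =>
    2 ^ (((φ.vars.erase x) \ (φ.assign x true).vars).card) * countEval l
  + 2 ^ (((φ.vars.erase x) \ (φ.assign x false).vars).card) * countEval r
| _, .compNode φ f => ∏ ψ ∈ φ.components.attach, countEval (f ψ.1 ψ.2)

end SRB

/-- The underlying data of an obstruction-tree: a base clause, or two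
obstruction-trees joined by a path (a list of incidence-graph vertices). -/
inductive ObsTree : Type where
| base : ℕ → ObsTree
| node : ObsTree → ObsTree → List (Var ⊕ ℕ) → ObsTree

namespace ObsTree

/-- The elements `V(T)` of an obstruction-tree, relative to formula `φ`. -/
def elts (φ : CNF) : ObsTree → Finset (Var ⊕ ℕ)
| .base i => insert (Sum.inr i) ((φ.cvars i).image Sum.inl)
| .node T₁ T₂ P => elts φ T₁ ∪ elts φ T₂ ∪ P.toFinset

/-- The variables `var(T)` among the elements of `T`. -/
def varSet (φ : CNF) (T : ObsTree) : Finset Var :=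
  (T.elts φ).biUnion fun v => match v with | Sum.inl x => {x} | Sum.inr _ => ∅

/-- The clauses `cla(T)` among the elements of `T`. -/
def claSet (φ : CNF) (T : ObsTree) : Finset ℕ :=
  (T.elts φ).biUnion fun v => match v with | Sum.inl _ => ∅ | Sum.inr i => {i}

/-- The destroy-neighborhood `N†_φ(T)`. -/
def nd (φ : CNF) : ObsTree → Finset Var
| .base i => φ.cvars i
| .node T₁ T₂ P =>
    (ObsTree.node T₁ T₂ P).varSet φ ∪
    (((ObsTree.node T₁ T₂ P).claSet φ).biUnion φ.pos ∩
      ((ObsTree.node T₁ T₂ P).claSet φ).biUnion φ.neg)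

end ObsTree

/-- `IsObsTree φ d k i T`: `T` is an `(i,d,k)`-obstruction-tree of `φ`.
A clause of width exactly `d` (with its variables) is a `(d,d,k)`-obstruction-tree;
two `(i,d,k)`-obstruction-trees with disjoint destroy-neighborhoods joined by a
path of length at most `λ_k = 4·2^k` form an `(i+1,d,k)`-obstruction-tree. -/
inductive IsObsTree (φ : CNF) (d k : ℕ) : ℕ → ObsTree → Prop where
| base (i : ℕ) : i ∈ φ.ids → (φ.cvars i).card = d → IsObsTree φ d k d (.base i)
| node (i : ℕ) (T₁ T₂ : ObsTree) (P : List (Var ⊕ ℕ)) :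
    IsObsTree φ d k i T₁ → IsObsTree φ d k i T₂ →
    Disjoint (T₁.nd φ) (T₂.nd φ) →
    P.Chain' (CNF.incGraph φ).Adj → P.Nodup →
    (hne : P ≠ []) →
    P.head hne ∈ T₁.elts φ → P.getLast hne ∈ T₂.elts φ →
    P.length ≤ 4 * 2 ^ k + 1 →
    IsObsTree φ d k (i+1) (.node T₁ T₂ P)

/-! Induct on the derivation of `SrbdLE φ k`, bounding the diameter of every component.
An edgeless graph has only trivial components, and splitting into components changes nothing.
When `x` is branched on, let `D` bound the diameters for `φ[x = true]`. A component avoiding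
`x` survives there intact. In the component of `x`, a shortest path from `x` leaves the closed
neighbourhood of `x` after two steps and from then on uses only edges of `φ[x = true]`, so
every vertex lies within `D + 2` of `x` and the diameter is at most `2D + 4`. Starting from
`0`, the recursion `D ↦ 2D + 4` gives `4·2^k − 4`. -/

open SimpleGraph

namespace SimpleGraph

variable {V : Type*} {G H : SimpleGraph V} {a b u v : V} {D : ℕ}

def ComponentDiamLE (G : SimpleGraph V) (D : ℕ) : Prop :=
  ∀ u v, G.Reachable u v → G.dist u v ≤ D

lemma componentDiamLE_bot : (⊥ : SimpleGraph V).ComponentDiamLE D := by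
  intro u v h
  rw [reachable_bot.1 h, dist_self]
  exact D.zero_le

lemma ComponentDiamLE.dist_le_of_le (hD : H.ComponentDiamLE D) (hHG : H ≤ G)
    (h : H.Reachable u v) : G.dist u v ≤ D :=
  (h.dist_anti hHG).trans (hD u v h)

lemma Walk.reachable_of_forall_mem_support {S : Set V}
    (hS : ∀ ⦃u v⦄, u ∈ S → v ∈ S → G.Adj u v → H.Adj u v) :
    ∀ {u v} (p : G.Walk u v), (∀ w ∈ p.support, w ∈ S) → H.Reachable u v
  | _, _, .nil, _ => .rfl
  | _, _, .cons h p, hp => by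
    simp only [Walk.support_cons, List.mem_cons, forall_eq_or_imp] at hp
    exact (hS hp.1 (hp.2 _ p.start_mem_support) h).reachable.trans
      (reachable_of_forall_mem_support hS p hp.2)

lemma not_adj_of_mem_support_of_dist_eq {y w : V} (q : G.Walk y b)
    (hq : G.dist a b = q.length + 2) (hw : w ∈ q.support) : ¬G.Adj a w := by
  classical
  intro haw
  have := dist_le (Walk.cons haw (q.dropUntil w hw))
  have := q.length_dropUntil_le_length hw
  simp only [Walk.length_cons] at *
  omega

variable (a) in
lemma dist_le_add_two_of_forall_not_adj (hHG : H ≤ G)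
    (hH : ∀ ⦃u v⦄, ¬G.Adj a u → ¬G.Adj a v → G.Adj u v → H.Adj u v)
    (hD : H.ComponentDiamLE D) (hb : G.Reachable a b) : G.dist a b ≤ D + 2 := by
  obtain ⟨p, hp⟩ := hb.exists_walk_length_eq_dist
  match p, hp with
  | .nil, hp => simp
  | .cons _ .nil, hp => simp only [Walk.length_cons, Walk.length_nil] at hp; omega
  | .cons (v := m) ham (.cons (v := y) hmy q), hp =>
    simp only [Walk.length_cons] at hp
    have hyb : H.Reachable y b := q.reachable_of_forall_mem_support (S := {w | ¬G.Adj a w}) hH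
      fun w hw => not_adj_of_mem_support_of_dist_eq q (by omega) hw
    have hay : G.dist a y ≤ 2 := by simpa using dist_le (Walk.cons ham (Walk.cons hmy .nil))
    calc G.dist a b ≤ G.dist a y + G.dist y b := (hyb.mono hHG).dist_triangle_right a
      _ ≤ 2 + D := add_le_add hay (hD.dist_le_of_le hHG hyb)
      _ = D + 2 := add_comm _ _

lemma componentDiamLE_of_forall_not_adj (a : V) (hHG : H ≤ G)
    (hH : ∀ ⦃u v⦄, ¬G.Adj a u → ¬G.Adj a v → G.Adj u v → H.Adj u v)
    (hD : H.ComponentDiamLE D) : G.ComponentDiamLE (2 * D + 4) := by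
  classical
  intro u v ⟨p⟩
  by_cases hau : G.Reachable a u
  · have hav : G.Reachable a v := hau.trans ⟨p⟩
    calc G.dist u v ≤ G.dist u a + G.dist a v := hau.symm.dist_triangle_left v
      _ ≤ (D + 2) + (D + 2) := by
        rw [dist_comm]
        exact add_le_add (dist_le_add_two_of_forall_not_adj a hHG hH hD hau)
          (dist_le_add_two_of_forall_not_adj a hHG hH hD hav)
      _ = 2 * D + 4 := by ring
  · refine (hD.dist_le_of_le hHG ?_).trans (by omega)
    refine p.reachable_of_forall_mem_support (S := {w | ¬G.Adj a w}) hH fun w hw haw => hau ?_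
    exact haw.reachable.trans ⟨(p.takeUntil w hw).reverse⟩

end SimpleGraph

namespace CNF

variable {φ ψ : CNF} {x : Var} {b : Bool} {u v : Var ⊕ ℕ}

lemma incGraph_mono (h : ∀ i ∈ ψ.ids, ∀ x ∈ ψ.cvars i, i ∈ φ.ids ∧ x ∈ φ.cvars i) :
    incGraph ψ ≤ incGraph φ := by
  rintro (x | i) (y | j) hadj
  exacts [hadj.elim, h j hadj.1 x hadj.2, h i hadj.1 y hadj.2, hadj.elim]

lemma incGraph_eq_bot (h : φ.vars = ∅) : incGraph φ = ⊥ := by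
  have hx : ∀ i ∈ φ.ids, ∀ x, x ∉ φ.cvars i := fun i hi x hx =>
    Finset.notMem_empty x (h ▸ Finset.mem_biUnion.2 ⟨i, hi, hx⟩)
  ext (x | i) (y | j)
  exacts [Iff.rfl, iff_of_false (fun hadj => hx j hadj.1 x hadj.2) id,
    iff_of_false (fun hadj => hx i hadj.1 y hadj.2) id, Iff.rfl]

lemma cvars_assign (i : ℕ) : (φ.assign x b).cvars i = (φ.cvars i).erase x := by
  simp only [cvars, assign, Finset.erase_union_distrib]

lemma mem_assign_ids {i : ℕ} (hi : i ∈ φ.ids) (hx : x ∉ φ.cvars i) :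
    i ∈ (φ.assign x b).ids := by
  simp only [cvars, Finset.mem_union, not_or] at hx
  exact Finset.mem_filter.2 ⟨hi, by cases b <;> simp [hx]⟩

lemma incGraph_assign_le : incGraph (φ.assign x b) ≤ incGraph φ :=
  incGraph_mono fun _ hi _ hy =>
    ⟨Finset.mem_of_mem_filter _ hi, Finset.mem_of_mem_erase (cvars_assign _ ▸ hy)⟩

lemma incGraph_assign_adj (hu : ¬(incGraph φ).Adj (.inl x) u)
    (hv : ¬(incGraph φ).Adj (.inl x) v) (h : (incGraph φ).Adj u v) :
    (incGraph (φ.assign x b)).Adj u v := by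
  have key : ∀ i y, i ∈ φ.ids → y ∈ φ.cvars i → ¬(incGraph φ).Adj (.inl x) (.inr i) →
      i ∈ (φ.assign x b).ids ∧ y ∈ (φ.assign x b).cvars i := fun i y hi hy hxi => by
    have hx : x ∉ φ.cvars i := fun hx => hxi ⟨hi, hx⟩
    exact ⟨mem_assign_ids hi hx,
      cvars_assign i ▸ Finset.mem_erase.2 ⟨fun e => hx (e ▸ hy), hy⟩⟩
  rcases u with y | i <;> rcases v with z | j
  exacts [h.elim, key j y h.1 h.2 hv, key i z h.1 h.2 hu, h.elim]

lemma mem_componentOf_ids {i j : ℕ} :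
    j ∈ (φ.componentOf i).ids ↔ j ∈ φ.ids ∧ (incGraph φ).Reachable (.inr i) (.inr j) := by
  classical
  simp [componentOf]

lemma incGraph_componentOf_le (i : ℕ) : incGraph (φ.componentOf i) ≤ incGraph φ :=
  incGraph_mono fun _ hj _ hy => ⟨(mem_componentOf_ids.1 hj).1, hy⟩

lemma incGraph_componentOf_adj {i : ℕ} (hu : (incGraph φ).Reachable (.inr i) u)
    (h : (incGraph φ).Adj u v) : (incGraph (φ.componentOf i)).Adj u v := by
  rcases u with y | j <;> rcases v with z | l
  exacts [h.elim, ⟨mem_componentOf_ids.2 ⟨h.1, hu.trans h.reachable⟩, h.2⟩,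
    ⟨mem_componentOf_ids.2 ⟨h.1, hu⟩, h.2⟩, h.elim]

lemma componentOf_mem_components {i : ℕ} (hi : i ∈ φ.ids) : φ.componentOf i ∈ φ.components := by
  classical
  exact Finset.mem_image_of_mem _ hi

lemma exists_reachable_of_adj (h : (incGraph φ).Adj u v) :
    ∃ i ∈ φ.ids, (incGraph φ).Reachable (.inr i) u := by
  rcases u with y | j <;> rcases v with z | l
  exacts [h.elim, ⟨l, h.1, h.symm.reachable⟩, ⟨j, h.1, .rfl⟩, h.elim]

lemma componentDiamLE_of_components {D : ℕ}
    (hD : ∀ ψ ∈ φ.components, (incGraph ψ).ComponentDiamLE D) :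
    (incGraph φ).ComponentDiamLE D := by
  classical
  rintro u v ⟨p⟩
  cases p with
  | nil => simp
  | cons h q =>
    obtain ⟨i, hi, hiu⟩ := exists_reachable_of_adj h
    refine (hD _ (componentOf_mem_components hi)).dist_le_of_le (incGraph_componentOf_le i) ?_
    refine (Walk.cons h q).reachable_of_forall_mem_support
      (S := {w | (incGraph φ).Reachable (.inr i) w}) (fun _ _ hu _ => incGraph_componentOf_adj hu)
      fun w hw => hiu.trans ⟨(Walk.cons h q).takeUntil w hw⟩

end CNF

theorem SrbdLE.componentDiamLE {φ : CNF} {k : ℕ} (h : SrbdLE φ k) :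
    (CNF.incGraph φ).ComponentDiamLE (4 * 2 ^ k - 4) := by
  induction h with
  | base φ k hvars => exact CNF.incGraph_eq_bot hvars ▸ componentDiamLE_bot
  | assign φ k x _ _ _ ih _ =>
    have h := componentDiamLE_of_forall_not_adj (.inl x) CNF.incGraph_assign_le
      (fun _ _ => CNF.incGraph_assign_adj) ih
    have : 2 * (4 * 2 ^ k - 4) + 4 = 4 * 2 ^ (k + 1) - 4 := by
      have := k.one_le_two_pow
      rw [pow_succ]
      omega
    rwa [this] at h
  | split φ k _ ih => exact CNF.componentDiamLE_of_components ih

/-- if the strong recursive backdoor depth of `φ` to `𝒞₀` is at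
most `k`, then every connected component of the incidence graph has diameter
at most `4·2^k − 4`. -/
theorem srbd_low_diameter (φ : CNF) (k : ℕ) (h : SrbdLE φ k) :
    ∀ u ∈ φ.vertexSet, ∀ v ∈ φ.vertexSet,
      (CNF.incGraph φ).Reachable u v →
      (CNF.incGraph φ).dist u v ≤ 4 * 2 ^ k - 4 :=
  fun u _ v _ => h.componentDiamLE u v
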